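/- For complex q, y, z with |q| < 1 and suitable convergence, Σ_{n≥0} yⁿ qⁿ / (zq; q²)_{n+1} = Σ_{n≥0} zⁿ qⁿ / (yq; q²)_{n+1}; i.e., the function ω(y,z;q) is symmetric in y and z. -/

import Mathlib

open scoped BigOperators

/-- Finite q-Pochhammer symbol `(a; q)_n`. -/
noncomputable def qPoch (a q : ℂ) (n : ℕ) : ℂ :=
  ∏ k ∈ Finset.range n, (1 - a * q ^ k)

/-- Infinite q-Pochhammer symbol `(a; q)_∞`. -/
noncomputable def qPochInf (a q : ℂ) : ℂ :=
  ∏' k : ℕ, (1 - a * q ^ k)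

/-!
By the q-binomial theorem, `1 / (v; Q)_{n+1} = ∑ₘ [n+m, m]_Q vᵐ`, so with `Q = q²` both sides
equal the double series `∑ₙ ∑ₘ [n+m, m]_Q (yq)ⁿ (zq)ᵐ`, read in the two orders of summation.
For `‖Q‖ < 1` the Gaussian coefficients are bounded uniformly in `n, m`, so this double series
converges absolutely and the order of summation may be exchanged.
-/

open Finset

theorem norm_mul_lt_one {R : Type*} [SeminormedRing R] {x y : R} (hx : ‖x‖ < 1) (hy : ‖y‖ ≤ 1) :
    ‖x * y‖ < 1 :=
  (norm_mul_le x y).trans_lt (mul_lt_one_of_nonneg_of_lt_one_left (norm_nonneg x) hx hy)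

variable {Q a : ℂ}

theorem qPoch_zero (a Q : ℂ) : qPoch a Q 0 = 1 :=
  prod_range_zero _

theorem qPoch_succ (a Q : ℂ) (n : ℕ) : qPoch a Q (n + 1) = qPoch a Q n * (1 - a * Q ^ n) :=
  prod_range_succ _ _

theorem one_sub_mul_pow_ne_zero (ha : ‖a‖ < 1) (hQ : ‖Q‖ ≤ 1) (k : ℕ) : 1 - a * Q ^ k ≠ 0 := by
  refine sub_ne_zero.2 fun h => ?_
  have : ‖a * Q ^ k‖ < 1 :=
    norm_mul_lt_one ha (by rw [norm_pow]; exact pow_le_one₀ (norm_nonneg Q) hQ)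
  rw [← h, norm_one] at this
  exact lt_irrefl _ this

theorem qPoch_ne_zero (ha : ‖a‖ < 1) (hQ : ‖Q‖ ≤ 1) (n : ℕ) : qPoch a Q n ≠ 0 :=
  prod_ne_zero_iff.2 fun k _ => one_sub_mul_pow_ne_zero ha hQ k

/-- The Gaussian binomial coefficient `[n + m, m]_Q`, indexed by the two parts so that its
symmetry is visible. -/
noncomputable def qBinom (Q : ℂ) (n m : ℕ) : ℂ :=
  qPoch Q Q (n + m) / (qPoch Q Q n * qPoch Q Q m)

theorem qBinom_comm (Q : ℂ) (n m : ℕ) : qBinom Q n m = qBinom Q m n := by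
  rw [qBinom, qBinom, add_comm, mul_comm]

theorem qBinom_zero_right (hQ : ‖Q‖ < 1) (n : ℕ) : qBinom Q n 0 = 1 := by
  rw [qBinom, add_zero, qPoch_zero, mul_one, div_self (qPoch_ne_zero hQ hQ.le n)]

theorem qBinom_zero_left (hQ : ‖Q‖ < 1) (m : ℕ) : qBinom Q 0 m = 1 := by
  rw [qBinom_comm, qBinom_zero_right hQ]

theorem qBinom_succ_succ (hQ : ‖Q‖ < 1) (n m : ℕ) :
    qBinom Q (n + 1) (m + 1) = qBinom Q n (m + 1) + Q ^ (n + 1) * qBinom Q (n + 1) m := by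
  have hn := qPoch_ne_zero hQ hQ.le n
  have hm := qPoch_ne_zero hQ hQ.le m
  have hn' := one_sub_mul_pow_ne_zero hQ hQ.le n
  have hm' := one_sub_mul_pow_ne_zero hQ hQ.le m
  simp only [qBinom, show n + 1 + (m + 1) = n + m + 1 + 1 by omega,
    show n + (m + 1) = n + m + 1 by omega, show n + 1 + m = n + m + 1 by omega, qPoch_succ]
  field_simp
  ring

theorem qBinom_eq_prod (hQ : ‖Q‖ < 1) (n m : ℕ) :
    qBinom Q n m = ∏ i ∈ range m, (1 - Q ^ (n + i + 1)) / (1 - Q ^ (i + 1)) := by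
  have hn := qPoch_ne_zero hQ hQ.le n
  rw [qBinom, qPoch, prod_range_add, ← qPoch, mul_div_mul_left _ _ hn, qPoch, ← prod_div_distrib]
  refine prod_congr rfl fun i _ => ?_
  ring

theorem norm_one_sub_pow_div_one_sub_pow_le (hQ : ‖Q‖ < 1) (n i : ℕ) :
    ‖(1 - Q ^ (n + i + 1)) / (1 - Q ^ (i + 1))‖ ≤ 1 + 2 * ‖Q‖ ^ i / (1 - ‖Q‖) := by
  set r := ‖Q‖
  have hr : 0 ≤ r := norm_nonneg Q
  have hti : r ^ (i + 1) ≤ r ^ i := pow_le_pow_of_le_one hr hQ.le (Nat.le_succ i)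
  have htr : r ^ (i + 1) ≤ r := pow_le_of_le_one hr hQ.le (Nat.succ_ne_zero i)
  have hnum : ‖1 - Q ^ (n + i + 1)‖ ≤ 1 + r ^ (i + 1) := by
    refine (norm_sub_le _ _).trans ?_
    rw [norm_one, norm_pow]
    linarith [pow_le_pow_of_le_one hr hQ.le (by omega : i + 1 ≤ n + i + 1)]
  have hden : 1 - r ^ (i + 1) ≤ ‖1 - Q ^ (i + 1)‖ := by
    simpa [norm_pow] using norm_sub_norm_le (1 : ℂ) (Q ^ (i + 1))
  have hpos : 0 < 1 - r ^ (i + 1) := by linarith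
  rw [norm_div]
  calc ‖1 - Q ^ (n + i + 1)‖ / ‖1 - Q ^ (i + 1)‖
      ≤ (1 + r ^ (i + 1)) / (1 - r ^ (i + 1)) := div_le_div₀ (by positivity) hnum hpos hden
    _ = 1 + 2 * r ^ (i + 1) / (1 - r ^ (i + 1)) := by field_simp; ring
    _ ≤ 1 + 2 * r ^ i / (1 - r) := by gcongr

theorem norm_qBinom_le (hQ : ‖Q‖ < 1) (n m : ℕ) :
    ‖qBinom Q n m‖ ≤ Real.exp (2 / (1 - ‖Q‖) ^ 2) := by
  set r := ‖Q‖
  have hr : 0 ≤ r := norm_nonneg Q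
  have h1r : 0 < 1 - r := sub_pos.2 hQ
  rw [qBinom_eq_prod hQ, norm_prod]
  calc ∏ i ∈ range m, ‖(1 - Q ^ (n + i + 1)) / (1 - Q ^ (i + 1))‖
      ≤ ∏ i ∈ range m, (1 + 2 * r ^ i / (1 - r)) :=
        prod_le_prod (fun _ _ => norm_nonneg _)
          fun i _ => norm_one_sub_pow_div_one_sub_pow_le hQ n i
    _ ≤ Real.exp (∑ i ∈ range m, 2 * r ^ i / (1 - r)) :=
        Real.prod_one_add_le_exp_sum _ fun i => by positivity
    _ ≤ Real.exp (2 / (1 - r) ^ 2) := by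
        gcongr
        have hgeom : ∑ i ∈ range m, r ^ i ≤ 1 / (1 - r) := by
          simpa using geom_sum_Ico_le_of_lt_one (m := 0) (n := m) hr hQ
        rw [← sum_div, ← mul_sum, div_le_div_iff₀ h1r (by positivity)]
        calc (2 * ∑ i ∈ range m, r ^ i) * (1 - r) ^ 2
            ≤ 2 * (1 / (1 - r)) * (1 - r) ^ 2 := by gcongr
          _ = 2 * (1 - r) := by field_simp

theorem summable_qBinom_mul_pow_mul_pow (hQ : ‖Q‖ < 1) {u v : ℂ} (hu : ‖u‖ < 1) (hv : ‖v‖ < 1) :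
    Summable fun p : ℕ × ℕ => qBinom Q p.1 p.2 * u ^ p.1 * v ^ p.2 := by
  have hgeom : Summable fun p : ℕ × ℕ => ‖u ^ p.1 * v ^ p.2‖ :=
    summable_mul_of_summable_norm (f := fun n => u ^ n) (g := fun m => v ^ m)
      (by simpa using summable_geometric_of_lt_one (norm_nonneg u) hu)
      (by simpa using summable_geometric_of_lt_one (norm_nonneg v) hv) |>.norm
  refine .of_norm_bounded (hgeom.mul_left (Real.exp (2 / (1 - ‖Q‖) ^ 2))) fun p => ?_
  rw [mul_assoc, norm_mul]
  gcongr
  exact norm_qBinom_le hQ p.1 p.2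

theorem summable_qBinom_mul_pow (hQ : ‖Q‖ < 1) (ha : ‖a‖ < 1) (n : ℕ) :
    Summable fun m => qBinom Q n m * a ^ m := by
  refine .of_norm_bounded ((summable_geometric_of_lt_one (norm_nonneg a) ha).mul_left
    (Real.exp (2 / (1 - ‖Q‖) ^ 2))) fun m => ?_
  rw [norm_mul, norm_pow]
  gcongr
  exact norm_qBinom_le hQ n m

theorem HasSum.qBinom_mul_pow_of_succ (hQ : ‖Q‖ < 1) {n : ℕ} {T : ℂ}
    (hT : HasSum (fun m => qBinom Q (n + 1) m * a ^ m) T) :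
    HasSum (fun m => qBinom Q n m * a ^ m) ((1 - a * Q ^ (n + 1)) * T) := by
  rw [← hasSum_nat_add_iff' 1]
  convert ((hasSum_nat_add_iff' 1).2 hT).sub (hT.mul_left (a * Q ^ (n + 1))) using 1
  · funext m
    rw [qBinom_succ_succ hQ]
    ring
  · simp [qBinom_zero_right hQ]
    ring

theorem hasSum_qBinom_mul_pow (hQ : ‖Q‖ < 1) (ha : ‖a‖ < 1) (n : ℕ) :
    HasSum (fun m => qBinom Q n m * a ^ m) (qPoch a Q (n + 1))⁻¹ := by
  induction n with
  | zero =>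
    simpa [qBinom_zero_left hQ, qPoch_succ, qPoch_zero] using hasSum_geometric_of_norm_lt_one ha
  | succ n ih =>
    have hT := (summable_qBinom_mul_pow hQ ha (n + 1)).hasSum
    have hprod := (hT.qBinom_mul_pow_of_succ hQ).unique ih
    rwa [qPoch_succ, mul_inv, ← hprod, mul_comm,
      inv_mul_cancel_left₀ (one_sub_mul_pow_ne_zero ha hQ.le (n + 1))]

theorem tsum_pow_div_qPoch_eq_tsum_tsum (hQ : ‖Q‖ < 1) {v : ℂ} (hv : ‖v‖ < 1) (u : ℂ) :
    ∑' n, u ^ n / qPoch v Q (n + 1) = ∑' n, ∑' m, qBinom Q n m * u ^ n * v ^ m := by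
  refine tsum_congr fun n => ?_
  rw [div_eq_mul_inv, ← (hasSum_qBinom_mul_pow hQ hv n).tsum_eq, ← tsum_mul_left]
  exact tsum_congr fun m => by ring

theorem tsum_pow_div_qPoch_comm (hQ : ‖Q‖ < 1) {u v : ℂ} (hu : ‖u‖ < 1) (hv : ‖v‖ < 1) :
    ∑' n, u ^ n / qPoch v Q (n + 1) = ∑' n, v ^ n / qPoch u Q (n + 1) := by
  have h : Summable (Function.uncurry fun n m => qBinom Q n m * u ^ n * v ^ m) :=
    summable_qBinom_mul_pow_mul_pow hQ hu hv
  rw [tsum_pow_div_qPoch_eq_tsum_tsum hQ hv, tsum_pow_div_qPoch_eq_tsum_tsum hQ hu, ← h.tsum_comm]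
  exact tsum_congr fun n => tsum_congr fun m => by rw [qBinom_comm]; ring

theorem omega_symmetric_general (q y z : ℂ) (hq : ‖q‖ < 1) (hy : ‖y‖ < 1) (hz : ‖z‖ < 1) :
    ∑' n : ℕ, y ^ n * q ^ n / qPoch (z * q) (q ^ 2) (n + 1)
      = ∑' n : ℕ, z ^ n * q ^ n / qPoch (y * q) (q ^ 2) (n + 1) := by
  simp only [← mul_pow]
  exact tsum_pow_div_qPoch_comm (by simpa [sq] using norm_mul_lt_one hq hq.le)
    (norm_mul_lt_one hy hq.le) (norm_mul_lt_one hz hq.le)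

theorem omega_symmetric (q y z : ℂ) (hq : ‖q‖ < 1) (hy : ‖y‖ < 1) (hz : ‖z‖ < 1)
    (hdy : ∀ k : ℕ, 1 - y * q ^ (2 * k + 1) ≠ 0)
    (hdz : ∀ k : ℕ, 1 - z * q ^ (2 * k + 1) ≠ 0) :
    ∑' n : ℕ, y ^ n * q ^ n / qPoch (z * q) (q ^ 2) (n + 1)
      = ∑' n : ℕ, z ^ n * q ^ n / qPoch (y * q) (q ^ 2) (n + 1) :=
  omega_symmetric_general q y z hq hy hz
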